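/- Simulation lemma: For any policy π, any function f : S×A → ℝ, and any comparator policy π^e of a finite discounted MDP, V^{π^e} − V^π ≤ E_{s₀∼μ₀}[|f(s₀, π(s₀)) − V^π(s₀)|] + (1/(1−γ)) · E_{(s,a)∼d^{π^e}}[(T^π f)(s,a) − f(s,a)] + (1/(1−γ)) · E_{(s,a)∼d^{π^e}}[f(s,a) − f(s, π(s))]. -/

import Mathlib

open Finset

structure FinMDP (S A : Type*) [Fintype S] [Fintype A] where
  P : S → A → S → ℝ
  P_nonneg : ∀ s a s', 0 ≤ P s a s'
  P_sum : ∀ s a, ∑ s', P s a s' = 1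
  r : S → A → ℝ
  r_nonneg : ∀ s a, 0 ≤ r s a
  r_le_one : ∀ s a, r s a ≤ 1
  disc : ℝ
  disc_pos : 0 < disc
  disc_lt_one : disc < 1
  init : S → ℝ
  init_nonneg : ∀ s, 0 ≤ init s
  init_sum : ∑ s, init s = 1

variable {S A : Type*} [Fintype S] [Fintype A] [Nonempty S] [Nonempty A]

/-- A policy assigns to each state a probability mass function over actions. -/
def IsPolicy (π : S → A → ℝ) : Prop :=
  (∀ s a, 0 ≤ π s a) ∧ ∀ s, ∑ a, π s a = 1

/-- The Bellman operator `T^π`. -/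
noncomputable def FinMDP.bellman (M : FinMDP S A) (π f : S → A → ℝ) (s : S) (a : A) : ℝ :=
  M.r s a + M.disc * ∑ s', M.P s a s' * ∑ a', π s' a' * f s' a'

/-- `Q` is the action-value function of `π`, i.e. satisfies the Bellman equation. -/
def FinMDP.IsQ (M : FinMDP S A) (π Q : S → A → ℝ) : Prop :=
  ∀ s a, Q s a = M.bellman π Q s a

/-- The state value `V^π(s)` induced by a `Q`-function. -/
noncomputable def vOf (π Q : S → A → ℝ) (s : S) : ℝ := ∑ a, π s a * Q s a

/-- The scalar value `V^π = E_{s ∼ μ₀}[V^π(s)]`. -/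
noncomputable def FinMDP.scalarV (M : FinMDP S A) (π Q : S → A → ℝ) : ℝ :=
  ∑ s, M.init s * vOf π Q s

/-- Distribution of the state at time `t` under policy `π`. -/
noncomputable def FinMDP.stateDist (M : FinMDP S A) (π : S → A → ℝ) : ℕ → S → ℝ
  | 0 => M.init
  | (t + 1) => fun s' => ∑ s, ∑ a, FinMDP.stateDist M π t s * π s a * M.P s a s'

/-- The discounted occupancy measure `d^π(s,a) = (1-γ) ∑_t γ^t Pr^π(s_t = s, a_t = a)`. -/
noncomputable def FinMDP.occ (M : FinMDP S A) (π : S → A → ℝ) (s : S) (a : A) : ℝ :=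
  (1 - M.disc) * ∑' t : ℕ, M.disc ^ t * M.stateDist π t s * π s a

/-!
Write `ρₜ` for the state distribution at time `t` under `πᵉ`. Since `ρₜ₊₁` is `ρₜ` pushed through
`πᵉ` and `P`, for every `h : S → ℝ` the residual `r + γ P h - h` has `ρₜ ⊗ πᵉ`-mean
`𝔼_{ρₜ}[πᵉ r] + γ 𝔼_{ρₜ₊₁}[h] - 𝔼_{ρₜ}[h]`, while the Bellman equation for `Qᵉ` gives
`𝔼_{ρₜ}[πᵉ r] = 𝔼_{ρₜ}[Vᵉ] - γ 𝔼_{ρₜ₊₁}[Vᵉ]`. The discounted sum over `t` therefore telescopes: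
`(1-γ)⁻¹ 𝔼_{d^{πᵉ}}[r + γ P h - h] = V^{πᵉ} - 𝔼_{μ₀}[h]`. Taking `h = f(·, π(·))`, splitting
`T^π f - h = (T^π f - f) + (f - h)` turns the claim into an identity up to replacing
`𝔼_{μ₀}[h - V^π]` by `𝔼_{μ₀}|h - V^π|`.
-/

lemma hasSum_pow_mul_sub_pow_succ_mul {γ C : ℝ} (hγ : |γ| < 1) {u : ℕ → ℝ}
    (hu : ∀ t, |u t| ≤ C) :
    HasSum (fun t => γ ^ t * u t - γ ^ (t + 1) * u (t + 1)) (u 0) := by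
  have hsum : Summable fun t => γ ^ t * u t := by
    refine Summable.of_norm_bounded ((summable_geometric_of_abs_lt_one hγ).abs.mul_left C)
      fun t => ?_
    rw [Real.norm_eq_abs, abs_mul, abs_pow, mul_comm]
    exact mul_le_mul_of_nonneg_right (hu t) (by positivity)
  have hshift := (hasSum_nat_add_iff' 1).mpr hsum.hasSum
  simpa using hsum.hasSum.sub hshift

section

omit [Nonempty S] [Nonempty A]

omit [Fintype S] in
lemma IsPolicy.le_one {π : S → A → ℝ} (hπ : IsPolicy π) (s : S) (a : A) : π s a ≤ 1 :=
  hπ.2 s ▸ single_le_sum (fun a _ => hπ.1 s a) (mem_univ a)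

omit [Fintype S] in
lemma IsPolicy.sum_mul {π : S → A → ℝ} (hπ : IsPolicy π) (s : S) (c : ℝ) :
    ∑ a, c * π s a = c := by
  rw [← mul_sum, hπ.2 s, mul_one]

namespace FinMDP

variable (M : FinMDP S A) {π : S → A → ℝ}

lemma sum_stateDist_policy_transition (t : ℕ) (h : S → ℝ) :
    ∑ s, ∑ a, M.stateDist π t s * π s a * ∑ s', M.P s a s' * h s' =
      ∑ s', M.stateDist π (t + 1) s' * h s' := by
  simp only [stateDist, sum_mul, mul_sum]
  exact (sum_congr rfl fun s _ => sum_comm).trans <| sum_comm.trans <|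
    sum_congr rfl fun s' _ => sum_congr rfl fun s _ => sum_congr rfl fun a _ => by ring

lemma stateDist_nonneg (hπ : IsPolicy π) (t : ℕ) (s : S) : 0 ≤ M.stateDist π t s := by
  induction t generalizing s with
  | zero => exact M.init_nonneg s
  | succ t ih =>
    exact sum_nonneg fun s _ => sum_nonneg fun a _ =>
      mul_nonneg (mul_nonneg (ih s) (hπ.1 s a)) (M.P_nonneg s a _)

lemma sum_stateDist (hπ : IsPolicy π) (t : ℕ) : ∑ s, M.stateDist π t s = 1 := by
  induction t with
  | zero => exact M.init_sum
  | succ t ih =>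
    have h := M.sum_stateDist_policy_transition (π := π) t fun _ => 1
    simp only [mul_one, M.P_sum, hπ.sum_mul] at h
    rw [← h, ih]

lemma stateDist_le_one (hπ : IsPolicy π) (t : ℕ) (s : S) : M.stateDist π t s ≤ 1 :=
  M.sum_stateDist hπ t ▸ single_le_sum (fun s _ => M.stateDist_nonneg hπ t s) (mem_univ s)

lemma abs_sum_stateDist_mul_le (hπ : IsPolicy π) (t : ℕ) (h : S → ℝ) :
    |∑ s, M.stateDist π t s * h s| ≤ ∑ s, |h s| := by
  refine (abs_sum_le_sum_abs _ _).trans (sum_le_sum fun s _ => ?_)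
  rw [abs_mul, abs_of_nonneg (M.stateDist_nonneg hπ t s)]
  exact mul_le_of_le_one_left (abs_nonneg _) (M.stateDist_le_one hπ t s)

lemma hasSum_stateDist_telescope (hπ : IsPolicy π) (h : S → ℝ) :
    HasSum (fun t => M.disc ^ t * ∑ s, M.stateDist π t s * h s -
        M.disc ^ (t + 1) * ∑ s, M.stateDist π (t + 1) s * h s)
      (∑ s, M.init s * h s) :=
  hasSum_pow_mul_sub_pow_succ_mul (abs_lt.2 ⟨by linarith [M.disc_pos], M.disc_lt_one⟩)
    (M.abs_sum_stateDist_mul_le hπ · h)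

lemma hasSum_occ (hπ : IsPolicy π) (s : S) (a : A) :
    HasSum (fun t => M.disc ^ t * M.stateDist π t s * π s a) (M.occ π s a / (1 - M.disc)) := by
  have hγ := M.disc_pos
  have hsum : Summable fun t => M.disc ^ t * M.stateDist π t s * π s a := by
    refine (summable_geometric_of_lt_one hγ.le M.disc_lt_one).of_nonneg_of_le
      (fun t => by have := M.stateDist_nonneg hπ t s; have := hπ.1 s a; positivity)
      fun t => ?_
    rw [mul_assoc]
    exact mul_le_of_le_one_right (pow_nonneg hγ.le t) <|
      mul_le_one₀ (M.stateDist_le_one hπ t s) (hπ.1 s a) (hπ.le_one s a)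
  convert hsum.hasSum using 1
  rw [occ, mul_div_cancel_left₀ _ (by linarith [M.disc_lt_one])]

lemma hasSum_occ_expect (hπ : IsPolicy π) (X : S → A → ℝ) :
    HasSum (fun t => M.disc ^ t * ∑ s, ∑ a, M.stateDist π t s * π s a * X s a)
      ((∑ s, ∑ a, M.occ π s a * X s a) / (1 - M.disc)) := by
  have h := hasSum_sum (s := univ) fun s _ => hasSum_sum (s := univ) fun a _ =>
    (M.hasSum_occ hπ s a).mul_right (X s a)
  simp only [div_mul_eq_mul_div, ← sum_div] at h
  simp only [mul_sum, ← mul_assoc]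
  exact h

lemma sum_stateDist_policy_mul_reward_add_transition (t : ℕ) (h : S → ℝ) :
    ∑ s, ∑ a, M.stateDist π t s * π s a * (M.r s a + M.disc * ∑ s', M.P s a s' * h s') =
      ∑ s, ∑ a, M.stateDist π t s * π s a * M.r s a +
        M.disc * ∑ s, M.stateDist π (t + 1) s * h s := by
  rw [← M.sum_stateDist_policy_transition t h, mul_sum, ← sum_add_distrib]
  refine sum_congr rfl fun s _ => ?_
  rw [mul_sum, ← sum_add_distrib]
  exact sum_congr rfl fun a _ => by ring

lemma sum_stateDist_policy_mul_state (hπ : IsPolicy π) (t : ℕ) (h : S → ℝ) :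
    ∑ s, ∑ a, M.stateDist π t s * π s a * h s = ∑ s, M.stateDist π t s * h s :=
  sum_congr rfl fun s _ => by simp only [mul_right_comm _ _ (h s), hπ.sum_mul]

lemma sum_stateDist_mul_vOf_of_isQ {Q : S → A → ℝ} (hQ : M.IsQ π Q) (t : ℕ) :
    ∑ s, M.stateDist π t s * vOf π Q s =
      ∑ s, ∑ a, M.stateDist π t s * π s a * M.r s a +
        M.disc * ∑ s, M.stateDist π (t + 1) s * vOf π Q s := by
  rw [← sum_stateDist_policy_mul_reward_add_transition]
  refine sum_congr rfl fun s _ => ?_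
  rw [vOf, mul_sum]
  exact sum_congr rfl fun a _ => by rw [hQ s a, mul_assoc]; rfl

/-- The Bellman flow equations of `d^{πᵉ}`, tested against the potential `h`. -/
lemma occ_expect_bellman_residual {πe Qe : S → A → ℝ} (hπe : IsPolicy πe) (hQe : M.IsQ πe Qe)
    (h : S → ℝ) :
    (∑ s, ∑ a, M.occ πe s a * (M.r s a + M.disc * ∑ s', M.P s a s' * h s' - h s)) /
        (1 - M.disc) =
      M.scalarV πe Qe - ∑ s, M.init s * h s := by
  refine (M.hasSum_occ_expect hπe _).unique ?_
  convert M.hasSum_stateDist_telescope hπe (fun s => vOf πe Qe s - h s) using 1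
  · funext t
    simp only [mul_sub, sum_sub_distrib, M.sum_stateDist_policy_mul_reward_add_transition,
      M.sum_stateDist_policy_mul_state hπe]
    linear_combination -(M.disc ^ t) * M.sum_stateDist_mul_vOf_of_isQ hQe t
  · simp only [scalarV, mul_sub, sum_sub_distrib]

end FinMDP

end

theorem stmt3_general (M : FinMDP S A) (π πe f Q Qe : S → A → ℝ)
    (hπe : IsPolicy πe) (hQe : M.IsQ πe Qe) :
    M.scalarV πe Qe - M.scalarV π Q ≤
      (∑ s, M.init s * |(∑ a, π s a * f s a) - vOf π Q s|)
      + (1 / (1 - M.disc)) * ∑ s, ∑ a, M.occ πe s a * (M.bellman π f s a - f s a)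
      + (1 / (1 - M.disc)) * ∑ s, ∑ a, M.occ πe s a * (f s a - ∑ a', π s a' * f s a') := by
  have hres := M.occ_expect_bellman_residual hπe hQe (vOf π f)
  have hsplit : 1 / (1 - M.disc) * ∑ s, ∑ a, M.occ πe s a * (M.bellman π f s a - f s a) +
      1 / (1 - M.disc) * ∑ s, ∑ a, M.occ πe s a * (f s a - ∑ a', π s a' * f s a') =
      M.scalarV πe Qe - ∑ s, M.init s * vOf π f s := by
    rw [← hres, ← mul_add, one_div_mul_eq_div, ← sum_add_distrib]
    congr 1
    exact sum_congr rfl fun s _ => by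
      rw [← sum_add_distrib]
      exact sum_congr rfl fun a _ => by simp only [FinMDP.bellman, vOf]; ring
  have hinit : ∑ s, M.init s * vOf π f s - M.scalarV π Q ≤
      ∑ s, M.init s * |(∑ a, π s a * f s a) - vOf π Q s| := by
    rw [FinMDP.scalarV, ← sum_sub_distrib]
    exact sum_le_sum fun s _ => by
      rw [← mul_sub]; exact mul_le_mul_of_nonneg_left (le_abs_self _) (M.init_nonneg s)
  linarith

/-- Simulation lemma. -/
theorem stmt3 (M : FinMDP S A) (π πe f Q Qe : S → A → ℝ)
    (hπ : IsPolicy π) (hπe : IsPolicy πe) (hQ : M.IsQ π Q) (hQe : M.IsQ πe Qe) :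
    M.scalarV πe Qe - M.scalarV π Q ≤
      (∑ s, M.init s * |(∑ a, π s a * f s a) - vOf π Q s|)
      + (1 / (1 - M.disc)) * ∑ s, ∑ a, M.occ πe s a * (M.bellman π f s a - f s a)
      + (1 / (1 - M.disc)) * ∑ s, ∑ a, M.occ πe s a * (f s a - ∑ a', π s a' * f s a') :=
  stmt3_general M π πe f Q Qe hπe hQe
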